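/- arXiv:math/0210044 — 3 statements merged into one kernel-verified Lean document; each statement's English description precedes it below -/
import Mathlib

section
/- Let V and W be modules over a commutative ring R, and let Φ = Σ_{k≥0} λ^k Φ_k : V[[λ]] → W[[λ]] be an R[[λ]]-linear map given by a formal series of R-linear maps Φ_k : V → W (extended λ-linearly and applied coefficientwise). Then Φ is surjective if and only if Φ_0 : V → W is surjective. -/
/-- Inductively constructed preimage sequence: `u n` is chosen (via a section `s`
of `Φk 0`) so that `Φk 0 (u n) = w n - ∑_{j<n} Φk (n-j) (u j)`. -/
noncomputable def stmt6.mkU {R V W : Type*} [CommRing R]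
    [AddCommGroup V] [Module R V] [AddCommGroup W] [Module R W]
    (Φk : ℕ → V →ₗ[R] W) (s : W → V) (w : ℕ → W) : ℕ → V
  | n => s (w n - ∑ j ∈ (Finset.range n).attach,
      Φk (n - j.1) (stmt6.mkU Φk s w j.1))
  decreasing_by exact Finset.mem_range.mp j.2

/-- A λ-linear map `Φ = ∑ λ^k Φ_k : V[[λ]] → W[[λ]]` (given coefficientwise by
the Cauchy-product formula) is surjective if and only if its classical part
`Φ₀` is surjective. -/
theorem stmt6 (R V W : Type*) [CommRing R]
    [AddCommGroup V] [Module R V] [AddCommGroup W] [Module R W]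
    (Φk : ℕ → V →ₗ[R] W)
    (Φ : (ℕ → V) → (ℕ → W))
    (hΦ : ∀ (u : ℕ → V) (n : ℕ),
      Φ u n = ∑ p ∈ Finset.HasAntidiagonal.antidiagonal n, Φk p.2 (u p.1)) :
    Function.Surjective Φ ↔ Function.Surjective (Φk 0) := by
  constructor
  · intro hsurj w
    obtain ⟨u, hu⟩ := hsurj (fun n => if n = 0 then w else 0)
    refine ⟨u 0, ?_⟩
    have h0 := congrFun hu 0
    rw [hΦ] at h0
    simpa using h0
  · intro h0 w
    choose s hs using h0
    set u := stmt6.mkU Φk s w with hu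
    refine ⟨u, funext fun n => ?_⟩
    rw [hΦ, Finset.Nat.sum_antidiagonal_eq_sum_range_succ_mk,
      Finset.sum_range_succ]
    have hun : u n = s (w n - ∑ j ∈ (Finset.range n).attach,
        Φk (n - j.1) (u j.1)) := by
      rw [hu, stmt6.mkU]
    rw [hun, Nat.sub_self, hs, Finset.sum_attach (Finset.range n)
      (fun j => Φk (n - j) (u j))]
    abel
end

section
/- Let A, B be associative ℝ[[λ]]-algebras with B having no λ-torsion, let g be a Lie algebra, and let Φ, Φ' : g → B be two linear maps each satisfying [Φ(ξ), f] = λ·(ξ·f) and [Φ'(ξ), f] = λ·(ξ·f) for all f ∈ B (for a fixed g-action on B by derivations) together with Φ([ξ,η]_λ) = [Φ(ξ),Φ(η)] and similarly for Φ', where [ξ,η]_λ = λ[ξ,η]. Then the difference c(ξ) = Φ(ξ) − Φ'(ξ) takes values in the centralizer of the g-action kernel, commutes with every element of B that lies in the image of the action, and satisfies c([ξ,η]) = 0 for all ξ, η ∈ g. In particular, if g = [g,g] (i.e. H¹(g,ℝ) = 0), then Φ(ξ) − Φ'(ξ) annihilates all brackets, so Φ and Φ' agree on [g,g] up to central elements,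 and two quantum moment maps agreeing modulo center on brackets coincide on g. -/
/-- Two quantum moment maps `Φ, Φ'` for the same action differ by
`c(ξ) = Φ(ξ) − Φ'(ξ)` which commutes with every element of `B`, vanishes on
brackets, and hence `Φ = Φ'` on `[g,g]`; in particular if `g = [g,g]`
(`H¹(g,ℝ) = 0`) the two quantum moment maps coincide. -/
theorem stmt7 (g : Type*) [LieRing g] [LieAlgebra ℝ g]
    (B : Type*) [Ring B] [Algebra (PowerSeries ℝ) B] [Algebra ℝ B]
    (htf : ∀ b : B, (PowerSeries.X : PowerSeries ℝ) • b = 0 → b = 0)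
    (act : g → B → B)
    (Φ Φ' : g →ₗ[ℝ] B)
    (hΦ : ∀ (ξ : g) (f : B),
      Φ ξ * f - f * Φ ξ = (PowerSeries.X : PowerSeries ℝ) • act ξ f)
    (hΦ' : ∀ (ξ : g) (f : B),
      Φ' ξ * f - f * Φ' ξ = (PowerSeries.X : PowerSeries ℝ) • act ξ f)
    (hΦbr : ∀ ξ η : g,
      (PowerSeries.X : PowerSeries ℝ) • Φ ⁅ξ, η⁆ = Φ ξ * Φ η - Φ η * Φ ξ)
    (hΦ'br : ∀ ξ η : g,
      (PowerSeries.X : PowerSeries ℝ) • Φ' ⁅ξ, η⁆ = Φ' ξ * Φ' η - Φ' η * Φ' ξ) :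
    (∀ (ξ : g) (f : B), (Φ ξ - Φ' ξ) * f = f * (Φ ξ - Φ' ξ)) ∧
    (∀ ξ η : g, Φ ⁅ξ, η⁆ = Φ' ⁅ξ, η⁆) ∧
    (∀ ξ : g, ξ ∈ Submodule.span ℝ {x : g | ∃ a b : g, ⁅a, b⁆ = x} → Φ ξ = Φ' ξ) := by
  have hc : ∀ (ξ : g) (f : B), (Φ ξ - Φ' ξ) * f = f * (Φ ξ - Φ' ξ) := by
    intro ξ f
    have h1 := hΦ ξ f
    have h2 := hΦ' ξ f
    have : Φ ξ * f - f * Φ ξ = Φ' ξ * f - f * Φ' ξ := by rw [h1, h2]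
    rw [sub_mul, mul_sub, sub_eq_sub_iff_sub_eq_sub]
    exact this
  have hbr : ∀ ξ η : g, Φ ⁅ξ, η⁆ = Φ' ⁅ξ, η⁆ := by
    intro ξ η
    have key : (PowerSeries.X : PowerSeries ℝ) • (Φ ⁅ξ, η⁆ - Φ' ⁅ξ, η⁆) = 0 := by
      rw [smul_sub, hΦbr, hΦ'br]
      have e1 := hc ξ (Φ η)
      have e2 := hc η (Φ' ξ)
      have expand : Φ ξ * Φ η - Φ η * Φ ξ - (Φ' ξ * Φ' η - Φ' η * Φ' ξ)
          = ((Φ ξ - Φ' ξ) * Φ η - Φ η * (Φ ξ - Φ' ξ))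
            + (Φ' ξ * (Φ η - Φ' η) - (Φ η - Φ' η) * Φ' ξ) := by noncomm_ring
      rw [expand, e1, e2]
      abel
    exact sub_eq_zero.mp (htf _ key)
  refine ⟨hc, hbr, ?_⟩
  intro ξ hξ
  have : Φ ξ - Φ' ξ = 0 := by
    induction hξ using Submodule.span_induction with
    | mem x hx =>
      obtain ⟨a, b, rfl⟩ := hx
      rw [hbr a b, sub_self]
    | zero => simp
    | add x y _ _ hx hy => rw [map_add, map_add]; rw [sub_eq_zero] at hx hy ⊢; rw [hx, hy]
    | smul r x _ hx => rw [map_smul, map_smul, ← smul_sub, hx, smul_zero]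
  exact sub_eq_zero.mp this
end

section
/- Let R be a commutative ring, A = R[[λ]]-algebra of the form C[[λ]] for a commutative R-algebra C (formal power series with coefficients in C, with coefficientwise-defined multiplication possibly deformed so that the λ⁰-part is the original product on C). Let Φ = Σ_k λ^k Φ_k : C[[λ]] → B[[λ]] be a surjective λ-linear multiplicative map onto another such algebra, and suppose p₁,…,p_r ∈ C and scalars c₁,…,c_r are such that ker Φ₀ equals the ideal of C generated by p₁ − c₁, …, p_r − c_r, and suppose Φ(p_i) = c_i^* ∈ R[[λ]] are central scalars. If moreover every f₀ ∈ ker Φ₀ can be written f₀ = Σ_i g_i (p_i − c_i), then ker Φ equals the (two-sided, λ-adically closed) ideal of C[[λ]] generated by p_i − c_i^*, i = 1,…,r. -/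
/-- Kernel of a quantum moment map: if `Φ : A → B` is a λ-linear ring
homomorphism, `B` is λ-torsion-free and λ-adically separated, the elements
`q i = p i − c_i^*` lie in `ker Φ`, and every element of `ker Φ` agrees modulo
`(λ)` with an element of the ideal generated by the `q i`, then `ker Φ` equals
the λ-adically closed ideal generated by the `q i`. -/
theorem stmt18 (A B : Type*) [Ring A] [Ring B]
    (lamA : A) (lamB : B)
    (hcA : ∀ a : A, lamA * a = a * lamA)
    (hcB : ∀ b : B, lamB * b = b * lamB)
    (Φ : A →+* B)
    (hlin : ∀ a : A, Φ (lamA * a) = lamB * Φ a)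
    (htf : ∀ b : B, lamB * b = 0 → b = 0)
    (hsep : ∀ b : B, (∀ m : ℕ, b ∈ Ideal.span {lamB ^ m}) → b = 0)
    (hfac : ∀ a ∈ Ideal.span {lamA}, ∃ a' : A, a = lamA * a')
    (r : ℕ) (q : Fin r → A)
    (hq : ∀ i, Φ (q i) = 0)
    (hstep : ∀ a : A, Φ a = 0 →
      ∃ g : Fin r → A, a - ∑ i, g i * q i ∈ Ideal.span {lamA}) :
    ∀ a : A, Φ a = 0 ↔
      ∀ m : ℕ, ∃ j ∈ Ideal.span (Set.range q), a - j ∈ Ideal.span {lamA ^ m} := by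
  -- powers of lamA commute with everything
  have hcApow : ∀ (m : ℕ) (a : A), lamA ^ m * a = a * lamA ^ m := by
    intro m
    induction m with
    | zero => simp
    | succ n ih =>
      intro a
      rw [pow_succ, mul_assoc, hcA, ← mul_assoc, ih, mul_assoc]
  have hlinpow : ∀ (m : ℕ) (a : A), Φ (lamA ^ m * a) = lamB ^ m * Φ a := by
    intro m
    induction m with
    | zero => simp
    | succ n ih =>
      intro a
      rw [pow_succ, ← hcA, mul_assoc, hlin, ih, pow_succ, ← hcB, mul_assoc]
  have htfpow : ∀ (m : ℕ) (b : B), lamB ^ m * b = 0 → b = 0 := by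
    intro m
    induction m with
    | zero => intro b hb; simpa using hb
    | succ n ih =>
      intro b hb
      rw [pow_succ', mul_assoc] at hb
      exact ih _ (htf _ hb)
  -- Φ vanishes on the span of range q
  have hcBpow : ∀ (m : ℕ) (b : B), lamB ^ m * b = b * lamB ^ m := by
    intro m
    induction m with
    | zero => simp
    | succ n ih =>
      intro b
      rw [pow_succ, mul_assoc, hcB, ← mul_assoc, ih, mul_assoc]
  have hker : ∀ j ∈ Ideal.span (Set.range q), Φ j = 0 := by
    intro j hj
    induction hj using Submodule.span_induction with
    | mem x hx =>
      obtain ⟨i, rfl⟩ := hx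
      exact hq i
    | zero => simp
    | add x y _ _ hx hy => simp [hx, hy]
    | smul g x _ hx =>
      show Φ (g * x) = 0
      rw [map_mul, hx, mul_zero]
  intro a
  constructor
  · intro ha m
    induction m with
    | zero =>
      refine ⟨0, Ideal.zero_mem _, ?_⟩
      rw [pow_zero]
      exact Ideal.mem_span_singleton'.2 ⟨a - 0, mul_one _⟩
    | succ n ih =>
      obtain ⟨j, hj, hmem⟩ := ih
      obtain ⟨x, hx⟩ := Ideal.mem_span_singleton'.1 hmem
      have hx' : a - j = lamA ^ n * x := by rw [← hx, hcApow]
      have hΦx : Φ x = 0 := by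
        apply htfpow n
        rw [← hlinpow, ← hx', map_sub, ha, hker j hj, sub_zero]
      obtain ⟨g, hg⟩ := hstep x hΦx
      obtain ⟨a', ha'⟩ := hfac _ hg
      refine ⟨j + lamA ^ n * ∑ i, g i * q i, ?_, ?_⟩
      · refine Ideal.add_mem _ hj ?_
        rw [Finset.mul_sum]
        refine Ideal.sum_mem _ fun i _ => ?_
        rw [← mul_assoc]
        exact Ideal.mul_mem_left _ _ (Ideal.subset_span ⟨i, rfl⟩)
      · have : a - (j + lamA ^ n * ∑ i, g i * q i)
            = lamA ^ (n + 1) * a' := by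
          rw [sub_add_eq_sub_sub, hx', ← mul_sub, ha', pow_succ, mul_assoc]
        rw [this]
        exact Ideal.mem_span_singleton'.2 ⟨a', (hcApow _ _).symm⟩
  · intro h
    apply hsep
    intro m
    obtain ⟨j, hj, hmem⟩ := h m
    obtain ⟨x, hx⟩ := Ideal.mem_span_singleton'.1 hmem
    have : Φ a = lamB ^ m * Φ x := by
      rw [← hlinpow, hcApow, hx, map_sub, hker j hj, sub_zero]
    rw [this]
    exact Ideal.mem_span_singleton'.2 ⟨Φ x, (hcBpow _ _).symm⟩
end
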